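/- arXiv:1812.00156 — 2 statements merged into one kernel-verified Lean document; each statement's English description precedes it below -/
import Mathlib

section
/- (Orthogonality of the analysis operator) Suppose G_m(λ_k) = H_m(λ_k) for all m and k, and the PR conditions hold with c = 1. Let U ∈ ℝ^{N×N} and U_{1,m} ∈ ℝ^{n×n} (m = 0,…,M−1) be orthogonal matrices, and let A ∈ ℝ^{N×N} be the matrix obtained by vertically stacking the M analysis blocks A_m = U_{1,m} S̃_{d,m} H_m(Λ) Uᵀ ∈ ℝ^{n×N}. Then AᵀA = I_N, i.e., the analysis transform of the filter bank is an orthogonal matrix. -/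
/-!
Orthogonality of the analysis operator of the M-channel critically sampled
spectral graph filter bank: when `G_m = H_m` and the perfect reconstruction
conditions hold with `c = 1`, the stacked analysis matrix `A` satisfies
`AᵀA = I_N`.

We index `ℝ^N` (with `N = M * n`) by `Fin M × Fin n`, the pair `(q, r)`
corresponding to the index `q * n + r`; the row index `(m, i)` of `A`
corresponds to the `i`-th row of the `m`-th analysis block.
-/

open Matrix

/-- The analysis sampling matrix `S̃_{d,m} ∈ ℝ^{n×N}`. -/
def tildeSd (M n : ℕ) (m : ℕ) : Matrix (Fin n) (Fin M × Fin n) ℝ :=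
  fun i qr =>
    if Even (qr.1 : ℕ) then (if i = qr.2 then 1 else 0)
    else (-1 : ℝ) ^ m * (if i = qr.2.rev then 1 else 0)

/-- The synthesis sampling matrix `S̃_{u,m} = S̃_{d,m}ᵀ ∈ ℝ^{N×n}`. -/
def tildeSu (M n : ℕ) (m : ℕ) : Matrix (Fin M × Fin n) (Fin n) ℝ :=
  (tildeSd M n m)ᵀ

lemma neg_one_pow_sq' (m : ℕ) : ((-1 : ℝ)) ^ m * (-1) ^ m = 1 := by
  rw [← pow_add]; exact Even.neg_one_pow ⟨m, rfl⟩

lemma SdtSd (M n m : ℕ) (q q' : Fin M) (r r' : Fin n) :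
    ((tildeSd M n m)ᵀ * tildeSd M n m) (q, r) (q', r') =
    if (Even (q : ℕ) ↔ Even (q' : ℕ)) then (if r = r' then 1 else 0)
    else (-1 : ℝ) ^ m * (if r' = r.rev then 1 else 0) := by
  simp only [Matrix.mul_apply, Matrix.transpose_apply, tildeSd]
  by_cases hq : Even (q : ℕ) <;> by_cases hq' : Even (q' : ℕ) <;>
    simp [hq, hq', Finset.sum_ite_eq, Finset.sum_ite_eq', mul_ite, ite_mul,
      mul_comm, eq_comm (a := r'), Fin.rev_eq_iff, neg_one_pow_sq']

lemma key (M n : ℕ) (lam : Fin M × Fin n → ℝ) (H : ℕ → ℝ → ℝ)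
    (hPR1 : ∀ (q : Fin M) (r : Fin n),
      ∑ m ∈ Finset.range M, H m (lam (q, r)) ^ 2 = 1)
    (hPR2 : ∀ (q q' : Fin M) (r : Fin n), q ≠ q' → Even ((q : ℤ) - (q' : ℤ)) →
      ∑ m ∈ Finset.range M, H m (lam (q, r)) * H m (lam (q', r)) = 0)
    (hPR3 : ∀ (q q' : Fin M) (r : Fin n), Odd ((q : ℤ) - (q' : ℤ)) →
      ∑ m ∈ Finset.range M,
        (-1 : ℝ) ^ m * H m (lam (q, r)) * H m (lam (q', r.rev)) = 0) :
    ∑ m ∈ Finset.range M,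
      Matrix.diagonal (fun j => H m (lam j)) * ((tildeSd M n m)ᵀ * tildeSd M n m)
        * Matrix.diagonal (fun j => H m (lam j)) = 1 := by
  ext ⟨q, r⟩ ⟨q', r'⟩
  rw [Matrix.sum_apply]
  simp only [Matrix.diagonal_mul, Matrix.mul_diagonal, SdtSd, Matrix.one_apply,
    Prod.mk.injEq]
  by_cases hpar : (Even (q : ℕ) ↔ Even (q' : ℕ))
  · have hpar' : Even ((q : ℤ) - (q' : ℤ)) := by
      rw [Int.even_sub]; simpa [Int.even_coe_nat] using hpar
    by_cases hr : r = r'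
    · subst hr
      by_cases hq : q = q'
      · subst hq
        simpa [pow_two] using hPR1 q r
      · simpa [hpar, hq] using hPR2 q q' r hq hpar'
    · simp [hpar, hr]
  · have hq : q ≠ q' := fun h => hpar (by rw [h])
    have hqq : ¬(q = q' ∧ r = r') := fun h => hq h.1
    have hodd : Odd ((q : ℤ) - (q' : ℤ)) := by
      have h1 : ¬ Even ((q : ℤ) - (q' : ℤ)) := by
        rw [Int.even_sub]; simpa [Int.even_coe_nat] using hpar
      exact Int.not_even_iff_odd.mp h1
    by_cases hr : r' = r.rev
    · subst hr
      have hqq' : ¬(q = q' ∧ r = r.rev) := fun h => hq h.1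
      simp only [if_neg hpar, if_pos (rfl : r.rev = r.rev), eq_self_iff_true,
        if_true, mul_one, if_neg hqq']
      refine Eq.trans ?_ (hPR3 q q' r hodd)
      exact Finset.sum_congr rfl fun m _ => by ring
    · simp [hpar, hr, hqq]
/-- **Orthogonality of the analysis operator.** -/
theorem analysis_operator_orthogonal
    (M n : ℕ) (hM : 0 < M) (hn : 0 < n)
    (lam : Fin M × Fin n → ℝ) (H : ℕ → ℝ → ℝ)
    (U : Matrix (Fin M × Fin n) (Fin M × Fin n) ℝ)
    (hU : Uᵀ * U = 1) (hU' : U * Uᵀ = 1)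
    (U1 : ℕ → Matrix (Fin n) (Fin n) ℝ)
    (hU1 : ∀ m, m < M → (U1 m)ᵀ * U1 m = 1)
    (hU1' : ∀ m, m < M → U1 m * (U1 m)ᵀ = 1)
    (hPR1 : ∀ (q : Fin M) (r : Fin n),
      ∑ m ∈ Finset.range M, H m (lam (q, r)) ^ 2 = 1)
    (hPR2 : ∀ (q q' : Fin M) (r : Fin n), q ≠ q' → Even ((q : ℤ) - (q' : ℤ)) →
      ∑ m ∈ Finset.range M, H m (lam (q, r)) * H m (lam (q', r)) = 0)
    (hPR3 : ∀ (q q' : Fin M) (r : Fin n), Odd ((q : ℤ) - (q' : ℤ)) →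
      ∑ m ∈ Finset.range M,
        (-1 : ℝ) ^ m * H m (lam (q, r)) * H m (lam (q', r.rev)) = 0)
    (A : Matrix (Fin M × Fin n) (Fin M × Fin n) ℝ)
    (hA : ∀ (mi : Fin M × Fin n) (k : Fin M × Fin n),
      A mi k = (U1 (mi.1 : ℕ) * tildeSd M n (mi.1 : ℕ) *
        Matrix.diagonal (fun j => H (mi.1 : ℕ) (lam j)) * Uᵀ) mi.2 k) :
    Aᵀ * A = 1 := by
  set C : ℕ → Matrix (Fin n) (Fin M × Fin n) ℝ := fun m =>
    U1 m * tildeSd M n m * Matrix.diagonal (fun j => H m (lam j)) * Uᵀ with hC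
  have h1 : Aᵀ * A = ∑ m : Fin M, (C (m : ℕ))ᵀ * C (m : ℕ) := by
    ext k k'
    rw [Matrix.sum_apply]
    simp only [Matrix.mul_apply, Matrix.transpose_apply]
    rw [Fintype.sum_prod_type]
    exact Finset.sum_congr rfl fun m _ => Finset.sum_congr rfl fun i _ => by
      rw [hA (m, i) k, hA (m, i) k']
  have h2 : ∀ m : Fin M, (C (m : ℕ))ᵀ * C (m : ℕ) =
      U * (Matrix.diagonal (fun j => H (m : ℕ) (lam j)) *
        ((tildeSd M n (m : ℕ))ᵀ * tildeSd M n (m : ℕ)) *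
        Matrix.diagonal (fun j => H (m : ℕ) (lam j))) * Uᵀ := by
    intro m
    have hu1 : (U1 (m : ℕ))ᵀ * U1 (m : ℕ) = 1 := hU1 _ m.isLt
    rw [hC]
    simp only [Matrix.transpose_mul, Matrix.transpose_transpose,
      Matrix.diagonal_transpose]
    calc U * ((Matrix.diagonal (fun j => H (m : ℕ) (lam j)))ᵀᵀ *
          ((tildeSd M n (m : ℕ))ᵀ * (U1 (m : ℕ))ᵀ)) *
          (U1 (m : ℕ) * tildeSd M n (m : ℕ) *
            Matrix.diagonal (fun j => H (m : ℕ) (lam j)) * Uᵀ) = _ := rfl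
      _ = _ := by
        simp only [Matrix.transpose_transpose, Matrix.mul_assoc]
        rw [← Matrix.mul_assoc ((U1 (m : ℕ))ᵀ), hu1, Matrix.one_mul]
  rw [h1, Finset.sum_congr rfl fun m _ => h2 m]
  rw [← Finset.sum_mul, ← Matrix.mul_sum]
  rw [Fin.sum_univ_eq_sum_range
    (fun m => Matrix.diagonal (fun j => H m (lam j)) *
      ((tildeSd M n m)ᵀ * tildeSd M n m) * Matrix.diagonal (fun j => H m (lam j)))]
  rw [key M n lam H hPR1 hPR2 hPR3, mul_one, hU']
end

section
/- (Appendix, eq. (27): even-shift alias cancellation for converted filters) Let p ∈ {1,…,M−1} be even and k ∈ {0,…,n−1}, and write ω_k = α(λ_k). If α(λ_{k+pn}) = α(λ_k) + 2πp/M and the classical alias-cancellation condition ∑_{m=0}^{M−1} conj(𝙶_m(ω)) 𝙷_m(ω + 2πp/M) = 0 holds for all ω ∈ ℝ, then ∑_{m=0}^{M−1} G_m(λ_k) H_m(λ_{k+pn}) = 0; indeed this sum equals e^{i(L−1)pπ/M} ∑_{m=0}^{M−1} conj(𝙶_m(ω_k)) 𝙷_m(ω_k + 2πp/M). -/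
open Complex Real

/-- The classical linear-phase frequency response `𝙷_m(ω)` built from the
real zero-phase part `h_m`: `𝙷_m(ω) = e^{−i(L−1)ω/2} h_m(ω)` for even `m`
and `𝙷_m(ω) = i e^{−i(L−1)ω/2} h_m(ω)` for odd `m` (eq. (14) of the paper). -/
noncomputable def classicalFilter (L : ℕ) (h : ℕ → ℝ → ℝ) (m : ℕ) (ω : ℝ) : ℂ :=
  if Even m then
    Complex.exp (-Complex.I * ((L : ℂ) - 1) * (ω : ℂ) / 2) * (h m ω : ℂ)
  else
    Complex.I * Complex.exp (-Complex.I * ((L : ℂ) - 1) * (ω : ℂ) / 2) * (h m ω : ℂ)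

/-- The converted spectral graph filter `H_m(λ)`:
`H_m(λ) = e^{i(L−1)α(λ)/2} 𝙷_m(α(λ))` for even `m` and
`H_m(λ) = −i e^{i(L−1)α(λ)/2} 𝙷_m(α(λ))` for odd `m` (eq. (15) of the paper). -/
noncomputable def convertedFilter (L : ℕ) (α : ℝ → ℝ) (h : ℕ → ℝ → ℝ) (m : ℕ)
    (lam : ℝ) : ℂ :=
  if Even m then
    Complex.exp (Complex.I * ((L : ℂ) - 1) * (α lam : ℂ) / 2) *
      classicalFilter L h m (α lam)
  else
    -Complex.I * Complex.exp (Complex.I * ((L : ℂ) - 1) * (α lam : ℂ) / 2) *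
      classicalFilter L h m (α lam)

lemma conv_eq (L : ℕ) (α : ℝ → ℝ) (h : ℕ → ℝ → ℝ) (m : ℕ) (lam : ℝ) :
    convertedFilter L α h m lam = (h m (α lam) : ℂ) := by
  unfold convertedFilter classicalFilter
  rcases Nat.even_or_odd m with he | ho
  · simp only [he, if_true]
    rw [← mul_assoc, ← Complex.exp_add,
      show Complex.I * ((L:ℂ)-1) * (α lam : ℂ) / 2 +
        -Complex.I * ((L:ℂ)-1) * (α lam : ℂ) / 2 = 0 by ring,
      Complex.exp_zero, one_mul]
  · simp only [Nat.not_even_iff_odd.2 ho, if_false]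
    have e0 : Complex.exp (Complex.I * ((L:ℂ)-1) * (α lam : ℂ) / 2) *
        Complex.exp (-Complex.I * ((L:ℂ)-1) * (α lam : ℂ) / 2) = 1 := by
      rw [← Complex.exp_add, show Complex.I * ((L:ℂ)-1) * (α lam : ℂ) / 2 +
        -Complex.I * ((L:ℂ)-1) * (α lam : ℂ) / 2 = 0 by ring, Complex.exp_zero]
    calc -Complex.I * Complex.exp (Complex.I * ((L:ℂ)-1) * (α lam : ℂ) / 2) *
          (Complex.I * Complex.exp (-Complex.I * ((L:ℂ)-1) * (α lam : ℂ) / 2) * (h m (α lam) : ℂ))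
        = -(Complex.I * Complex.I) * ((Complex.exp (Complex.I * ((L:ℂ)-1) * (α lam : ℂ) / 2) *
            Complex.exp (-Complex.I * ((L:ℂ)-1) * (α lam : ℂ) / 2)) * (h m (α lam) : ℂ)) := by ring
      _ = (h m (α lam) : ℂ) := by rw [Complex.I_mul_I, e0]; ring

lemma term_eq (L : ℕ) (g h : ℕ → ℝ → ℝ) (m : ℕ) (ω θ : ℝ) :
    (g m ω : ℂ) * (h m (ω + θ) : ℂ)
      = Complex.exp (Complex.I * ((L:ℂ)-1) * (θ:ℂ) / 2) *
        ((starRingEnd ℂ) (classicalFilter L g m ω) * classicalFilter L h m (ω+θ)) := by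
  have e0 : Complex.exp (Complex.I * ((L:ℂ)-1) * (θ:ℂ) / 2) *
      Complex.exp (Complex.I * ((L:ℂ)-1) * (ω:ℂ) / 2) *
      Complex.exp (-Complex.I * ((L:ℂ)-1) * ((ω:ℝ)+(θ:ℝ) : ℝ) / 2) = 1 := by
    rw [← Complex.exp_add, ← Complex.exp_add, show
      Complex.I * ((L:ℂ)-1) * (θ:ℂ) / 2 + Complex.I * ((L:ℂ)-1) * (ω:ℂ) / 2 +
        -Complex.I * ((L:ℂ)-1) * ((ω+θ : ℝ) : ℂ) / 2 = 0 by push_cast; ring,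
      Complex.exp_zero]
  have hconj : ∀ x : ℝ, (starRingEnd ℂ) (Complex.exp (-Complex.I * ((L:ℂ)-1) * (x:ℂ) / 2))
      = Complex.exp (Complex.I * ((L:ℂ)-1) * (x:ℂ) / 2) := by
    intro x
    rw [← Complex.exp_conj]
    congr 1
    simp [map_mul, map_div₀, Complex.conj_I, Complex.conj_ofReal, map_sub, map_ofNat]
  unfold classicalFilter
  rcases Nat.even_or_odd m with he | ho
  · simp only [he, if_true, map_mul, hconj, Complex.conj_ofReal]
    calc (g m ω : ℂ) * (h m (ω + θ) : ℂ)
        = (Complex.exp (Complex.I * ((L:ℂ)-1) * (θ:ℂ) / 2) *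
            Complex.exp (Complex.I * ((L:ℂ)-1) * (ω:ℂ) / 2) *
            Complex.exp (-Complex.I * ((L:ℂ)-1) * ((ω+θ : ℝ) : ℂ) / 2)) *
            ((g m ω : ℂ) * (h m (ω + θ) : ℂ)) := by rw [e0]; ring
      _ = _ := by push_cast; ring
  · simp only [Nat.not_even_iff_odd.2 ho, if_false, map_mul, hconj, Complex.conj_ofReal,
      Complex.conj_I]
    calc (g m ω : ℂ) * (h m (ω + θ) : ℂ)
        = (Complex.exp (Complex.I * ((L:ℂ)-1) * (θ:ℂ) / 2) *
            Complex.exp (Complex.I * ((L:ℂ)-1) * (ω:ℂ) / 2) *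
            Complex.exp (-Complex.I * ((L:ℂ)-1) * ((ω+θ : ℝ) : ℂ) / 2)) *
            (-(Complex.I * Complex.I)) * ((g m ω : ℂ) * (h m (ω + θ) : ℂ)) := by
          rw [e0, Complex.I_mul_I]; ring
      _ = _ := by push_cast; ring

/-- **Appendix, eq. (27): even-shift alias cancellation for converted
filters.**  For even `p ∈ {1,…,M−1}` and `k ∈ {0,…,n−1}` with
`ω_k = α(λ_k)`, if `α(λ_{k+pn}) = α(λ_k) + 2πp/M` and the classical alias
cancellation condition holds, then `∑_m G_m(λ_k) H_m(λ_{k+pn}) = 0`; indeed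
this sum equals `e^{i(L−1)pπ/M} ∑_m conj(𝙶_m(ω_k)) 𝙷_m(ω_k + 2πp/M)`. -/
theorem converted_alias_cancellation_even_shift
    (M n K : ℕ) (hM : Even M) (hM0 : 0 < M) (hn : 0 < n) (hK : 0 < K)
    (L : ℕ) (hL : L = M * K)
    (lam : ℕ → ℝ) (h g : ℕ → ℝ → ℝ) (α : ℝ → ℝ)
    (p : ℕ) (hp1 : 1 ≤ p) (hp2 : p < M) (hpe : Even p)
    (k : ℕ) (hk : k < n)
    (hα : α (lam (k + p * n)) = α (lam k) + 2 * Real.pi * p / M)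
    (hAC : ∀ ω : ℝ,
      ∑ m ∈ Finset.range M,
        (starRingEnd ℂ) (classicalFilter L g m ω) *
          classicalFilter L h m (ω + 2 * Real.pi * p / M) = 0) :
    (∑ m ∈ Finset.range M,
        convertedFilter L α g m (lam k) *
          convertedFilter L α h m (lam (k + p * n)) = 0) ∧
      ∑ m ∈ Finset.range M,
          convertedFilter L α g m (lam k) *
            convertedFilter L α h m (lam (k + p * n))
        = Complex.exp (Complex.I * ((L : ℂ) - 1) * (p : ℂ) * (Real.pi : ℂ) / (M : ℂ)) *
            ∑ m ∈ Finset.range M,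
              (starRingEnd ℂ) (classicalFilter L g m (α (lam k))) *
                classicalFilter L h m (α (lam k) + 2 * Real.pi * p / M) := by

  set ω := α (lam k) with hω
  set θ := 2 * Real.pi * p / M with hθ
  have h1 : ∀ m ∈ Finset.range M,
      convertedFilter L α g m (lam k) * convertedFilter L α h m (lam (k + p * n))
        = (g m ω : ℂ) * (h m (ω + θ) : ℂ) := by
    intro m _
    rw [conv_eq, conv_eq, hα]
  have h2 : ∑ m ∈ Finset.range M,
      convertedFilter L α g m (lam k) * convertedFilter L α h m (lam (k + p * n))
      = Complex.exp (Complex.I * ((L:ℂ)-1) * (θ:ℂ) / 2) *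
        ∑ m ∈ Finset.range M,
          (starRingEnd ℂ) (classicalFilter L g m ω) * classicalFilter L h m (ω + θ) := by
    rw [Finset.sum_congr rfl h1, Finset.mul_sum]
    exact Finset.sum_congr rfl fun m _ => term_eq L g h m ω θ
  have hexp : Complex.exp (Complex.I * ((L:ℂ)-1) * (θ:ℂ) / 2)
      = Complex.exp (Complex.I * ((L : ℂ) - 1) * (p : ℂ) * (Real.pi : ℂ) / (M : ℂ)) := by
    congr 1
    rw [hθ]
    push_cast
    ring
  constructor
  · rw [h2, hAC ω]
    ring
  · rw [h2, hexp]
end
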